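/- Let G be a multiplicative Lie algebra. Then there exists a multiplicative Lie algebra H which is a stem multiplicative Lie algebra (i.e. 𝒵(H) ⊆ ^M[H,H]) such that G and H are isoclinic. -/

import Mathlib

universe u v

open scoped commutatorElement

/-- A multiplicative Lie algebra: a group with an extra binary operation `⋆`
satisfying the Ellis axioms. -/
class MultLieAlgebra (G : Type u) extends Group G where
  lstar : G → G → G
  lstar_self : ∀ g : G, lstar g g = 1
  lstar_mul_right : ∀ g h h' : G, lstar g (h * h') = lstar g h * (h * lstar g h' * h⁻¹)
  lstar_mul_left : ∀ g g' h : G, lstar (g * g') h = (g * lstar g' h * g⁻¹) * lstar g h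
  lstar_jacobi : ∀ g h k : G,
      lstar (lstar g h) (h * k * h⁻¹) * lstar (lstar h k) (k * g * k⁻¹) *
        lstar (lstar k g) (g * h * g⁻¹) = 1
  conj_lstar : ∀ k g h : G, k * lstar g h * k⁻¹ = lstar (k * g * k⁻¹) (k * h * k⁻¹)

namespace MultLieAlgebra

infixl:72 " ⋆ " => MultLieAlgebra.lstar

variable {G : Type u} [MultLieAlgebra G]

lemma one_lstar (x : G) : (1 : G) ⋆ x = 1 := by
  have h := lstar_mul_left (1 : G) 1 x
  simp only [one_mul, inv_one, mul_one] at h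
  exact (right_eq_mul.mp h)

lemma lstar_one (x : G) : x ⋆ (1 : G) = 1 := by
  have h := lstar_mul_right x (1 : G) 1
  simp only [one_mul, inv_one, mul_one] at h
  exact left_eq_mul.mp h

lemma inv_lstar_of_lstar_eq_one {g : G} (hg : ∀ x : G, g ⋆ x = 1) (y : G) : g⁻¹ ⋆ y = 1 := by
  have h := lstar_mul_left g⁻¹ g y
  simp only [inv_mul_cancel, one_lstar, hg, mul_one, inv_inv] at h
  simpa using h.symm

lemma lstar_inv_of_lstar_eq_one {g : G} (hg : ∀ x : G, x ⋆ g = 1) (y : G) : y ⋆ g⁻¹ = 1 := by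
  have h := lstar_mul_right y g⁻¹ g
  simp only [inv_mul_cancel, lstar_one, hg, mul_one, inv_inv] at h
  simpa using h.symm

/-- The multiplicative commutator ideal `ᴹ[G,G]`, generated by all commutators
`⁅a,b⁆` and all values `a ⋆ b`. -/
def mlCommutator (G : Type u) [MultLieAlgebra G] : Subgroup G :=
  Subgroup.closure {x : G | (∃ a b : G, x = ⁅a, b⁆) ∨ ∃ a b : G, x = a ⋆ b}

lemma commutator_mem_mlCommutator (a b : G) : ⁅a, b⁆ ∈ mlCommutator G :=
  Subgroup.subset_closure (Or.inl ⟨a, b, rfl⟩)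

lemma lstar_mem_mlCommutator (a b : G) : a ⋆ b ∈ mlCommutator G :=
  Subgroup.subset_closure (Or.inr ⟨a, b, rfl⟩)

instance mlCommutator_normal : (mlCommutator G).Normal := by
  constructor
  intro n hn g
  induction hn using Subgroup.closure_induction with
  | mem x hx =>
    rcases hx with ⟨a, b, rfl⟩ | ⟨a, b, rfl⟩
    · have : g * ⁅a, b⁆ * g⁻¹ = ⁅g * a * g⁻¹, g * b * g⁻¹⁆ := by
        simp only [commutatorElement_def]; group
      rw [this]; exact commutator_mem_mlCommutator _ _
    · rw [conj_lstar]; exact lstar_mem_mlCommutator _ _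
  | one => simpa using one_mem (mlCommutator G)
  | mul x y hx hy ihx ihy =>
    have : g * (x * y) * g⁻¹ = (g * x * g⁻¹) * (g * y * g⁻¹) := by group
    rw [this]; exact mul_mem ihx ihy
  | inv x hx ihx =>
    have : g * x⁻¹ * g⁻¹ = (g * x * g⁻¹)⁻¹ := by group
    rw [this]; exact inv_mem ihx

/-- The multiplicative Lie center `𝒵(G) = Z(G) ∩ LZ(G)`. -/
def mlCenter (G : Type u) [MultLieAlgebra G] : Subgroup G where
  carrier := {g : G | (∀ x : G, g * x = x * g) ∧ ∀ x : G, g ⋆ x = 1 ∧ x ⋆ g = 1}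
  one_mem' := ⟨fun x => by simp, fun x => ⟨one_lstar x, lstar_one x⟩⟩
  mul_mem' := by
    rintro a b ⟨ha₁, ha₂⟩ ⟨hb₁, hb₂⟩
    refine ⟨fun x => by rw [mul_assoc, hb₁ x, ← mul_assoc, ha₁ x, mul_assoc], fun x => ?_⟩
    constructor
    · rw [lstar_mul_left, (hb₂ x).1, (ha₂ x).1]; simp
    · rw [lstar_mul_right, (ha₂ x).2, (hb₂ x).2]; simp
  inv_mem' := by
    rintro a ⟨ha₁, ha₂⟩
    refine ⟨fun x => by rw [inv_mul_eq_iff_eq_mul, ← mul_assoc, ha₁ x, mul_assoc,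
      mul_inv_cancel, mul_one], fun x => ?_⟩
    exact ⟨inv_lstar_of_lstar_eq_one (fun y => (ha₂ y).1) x,
      lstar_inv_of_lstar_eq_one (fun y => (ha₂ y).2) x⟩

lemma mem_mlCenter_iff {g : G} :
    g ∈ mlCenter G ↔ (∀ x : G, g * x = x * g) ∧ ∀ x : G, g ⋆ x = 1 ∧ x ⋆ g = 1 :=
  Iff.rfl

instance mlCenter_normal : (mlCenter G).Normal := by
  constructor
  intro n hn g
  have h : g * n * g⁻¹ = n := by rw [← hn.1 g]; group
  rw [h]; exact hn

/-- An isoclinism between two multiplicative Lie algebras. -/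
structure Isoclinism (G : Type u) (H : Type v) [MultLieAlgebra G] [MultLieAlgebra H] where
  lam : (G ⧸ mlCenter G) ≃* (H ⧸ mlCenter H)
  mu : mlCommutator G ≃* mlCommutator H
  map_commutator : ∀ (g g' : G) (h h' : H),
    lam (QuotientGroup.mk g) = QuotientGroup.mk h →
    lam (QuotientGroup.mk g') = QuotientGroup.mk h' →
    (mu ⟨⁅g, g'⁆, commutator_mem_mlCommutator g g'⟩ : H) = ⁅h, h'⁆
  map_lstar : ∀ (g g' : G) (h h' : H),
    lam (QuotientGroup.mk g) = QuotientGroup.mk h →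
    lam (QuotientGroup.mk g') = QuotientGroup.mk h' →
    (mu ⟨g ⋆ g', lstar_mem_mlCommutator g g'⟩ : H) = h ⋆ h'

/-- Two multiplicative Lie algebras are isoclinic if there is an isoclinism between them. -/
def Isoclinic (G : Type u) (H : Type v) [MultLieAlgebra G] [MultLieAlgebra H] : Prop :=
  Nonempty (Isoclinism G H)

/-- Componentwise multiplicative Lie algebra structure on a binary product. -/
instance instProd (G : Type u) (H : Type v) [MultLieAlgebra G] [MultLieAlgebra H] :
    MultLieAlgebra (G × H) where
  lstar a b := (a.1 ⋆ b.1, a.2 ⋆ b.2)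
  lstar_self a := by ext <;> simp [lstar_self]
  lstar_mul_right a b c := by ext <;> simp [lstar_mul_right]
  lstar_mul_left a b c := by ext <;> simp [lstar_mul_left]
  lstar_jacobi a b c := by ext <;> simp [lstar_jacobi]
  conj_lstar k a b := by ext <;> simp [← conj_lstar]

/-- Componentwise multiplicative Lie algebra structure on a Pi type. -/
instance instPi {ι : Type v} (f : ι → Type u) [∀ i, MultLieAlgebra (f i)] :
    MultLieAlgebra (∀ i, f i) where
  lstar a b := fun i => a i ⋆ b i
  lstar_self a := by funext i; simp [lstar_self]
  lstar_mul_right a b c := by funext i; simp [lstar_mul_right]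
  lstar_mul_left a b c := by funext i; simp [lstar_mul_left]
  lstar_jacobi a b c := by funext i; simp [lstar_jacobi]
  conj_lstar k a b := by funext i; simp [← conj_lstar]

/-- The trivial multiplicative Lie algebra structure on the one-element group. -/
instance instPUnit : MultLieAlgebra PUnit.{u+1} where
  lstar _ _ := 1
  lstar_self _ := rfl
  lstar_mul_right _ _ _ := rfl
  lstar_mul_left _ _ _ := rfl
  lstar_jacobi _ _ _ := rfl
  conj_lstar _ _ _ := rfl

/-- A subalgebra of a multiplicative Lie algebra: a subgroup closed under `⋆`. -/
structure MLSubalgebra (G : Type u) [MultLieAlgebra G] extends Subgroup G where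
  lstar_mem' : ∀ {a b : G}, a ∈ carrier → b ∈ carrier → a ⋆ b ∈ carrier

/-- A subalgebra is a multiplicative Lie algebra with the restricted operations. -/
instance instSubalgebra (H : MLSubalgebra G) : MultLieAlgebra H.toSubgroup where
  lstar a b := ⟨(a : G) ⋆ (b : G), H.lstar_mem' a.2 b.2⟩
  lstar_self a := Subtype.ext (lstar_self (a : G))
  lstar_mul_right a b c := Subtype.ext (lstar_mul_right (a : G) b c)
  lstar_mul_left a b c := Subtype.ext (lstar_mul_left (a : G) b c)
  lstar_jacobi a b c := Subtype.ext (lstar_jacobi (a : G) b c)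
  conj_lstar k a b := Subtype.ext (conj_lstar (k : G) a b)

lemma mul_center_lstar {z : G} (hz : z ∈ mlCenter G) (g y : G) : (g * z) ⋆ y = g ⋆ y := by
  rw [lstar_mul_left, (hz.2 y).1]
  simp

lemma lstar_mul_center {z : G} (hz : z ∈ mlCenter G) (g y : G) : y ⋆ (g * z) = y ⋆ g := by
  rw [lstar_mul_right, (hz.2 y).2]
  simp

/-- The subalgebra `H·𝒵(G)` generated by a subalgebra `H` and the multiplicative
Lie center of `G`. -/
def MLSubalgebra.centerJoin (H : MLSubalgebra G) : MLSubalgebra G where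
  carrier := {x : G | ∃ h ∈ H.carrier, ∃ z ∈ mlCenter G, x = h * z}
  one_mem' := ⟨1, H.toSubgroup.one_mem, 1, one_mem _, by simp⟩
  mul_mem' := by
    rintro x y ⟨h, hh, z, hz, rfl⟩ ⟨h', hh', z', hz', rfl⟩
    refine ⟨h * h', H.toSubgroup.mul_mem hh hh', z * z', mul_mem hz hz', ?_⟩
    rw [mul_assoc, ← mul_assoc z h' z', hz.1 h', mul_assoc, ← mul_assoc, ← mul_assoc]
  inv_mem' := by
    rintro x ⟨h, hh, z, hz, rfl⟩
    refine ⟨h⁻¹, H.toSubgroup.inv_mem hh, z⁻¹, inv_mem hz, ?_⟩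
    rw [mul_inv_rev, (inv_mem hz).1 h⁻¹]
  lstar_mem' := by
    rintro x y ⟨h, hh, z, hz, rfl⟩ ⟨h', hh', z', hz', rfl⟩
    exact ⟨h ⋆ h', H.lstar_mem' hh hh', 1, one_mem _, by
      rw [mul_center_lstar hz, lstar_mul_center hz', mul_one]⟩

/-- An ideal of a multiplicative Lie algebra: a normal subgroup `I` with
`g ⋆ i ∈ I` and `i ⋆ g ∈ I` for all `g ∈ G`, `i ∈ I`. -/
structure MLIdeal (G : Type u) [MultLieAlgebra G] extends Subgroup G where
  conj_mem' : ∀ n : G, n ∈ carrier → ∀ g : G, g * n * g⁻¹ ∈ carrier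
  lstar_mem_left' : ∀ (g : G) {i : G}, i ∈ carrier → g ⋆ i ∈ carrier
  lstar_mem_right' : ∀ (g : G) {i : G}, i ∈ carrier → i ⋆ g ∈ carrier

instance MLIdeal.normal (I : MLIdeal G) : I.toSubgroup.Normal := ⟨I.conj_mem'⟩

/-- An ideal is in particular a subalgebra. -/
def MLIdeal.toMLSubalgebra (I : MLIdeal G) : MLSubalgebra G :=
  { I.toSubgroup with lstar_mem' := fun {a _} _ hb => I.lstar_mem_left' a hb }

lemma MLIdeal.lstar_congr (I : MLIdeal G) {a a' b b' : G}
    (ha : a⁻¹ * a' ∈ I.toSubgroup) (hb : b⁻¹ * b' ∈ I.toSubgroup) :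
    (a ⋆ b)⁻¹ * (a' ⋆ b') ∈ I.toSubgroup := by
  obtain ⟨i, hi, rfl⟩ : ∃ i ∈ I.toSubgroup, a' = a * i :=
    ⟨a⁻¹ * a', ha, by group⟩
  obtain ⟨j, hj, rfl⟩ : ∃ j ∈ I.toSubgroup, b' = b * j :=
    ⟨b⁻¹ * b', hb, by group⟩
  have h1 : (a * i) ⋆ (b * j) = (a * (i ⋆ (b * j)) * a⁻¹) * (a ⋆ (b * j)) :=
    lstar_mul_left a i (b * j)
  have h2 : a ⋆ (b * j) = (a ⋆ b) * (b * (a ⋆ j) * b⁻¹) := lstar_mul_right a b j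
  rw [h1, h2]
  have hu : a * (i ⋆ (b * j)) * a⁻¹ ∈ I.toSubgroup :=
    I.conj_mem' _ (I.lstar_mem_right' _ hi) a
  have hv : b * (a ⋆ j) * b⁻¹ ∈ I.toSubgroup :=
    I.conj_mem' _ (I.lstar_mem_left' _ hj) b
  have : (a ⋆ b)⁻¹ * (a * (i ⋆ (b * j)) * a⁻¹ * ((a ⋆ b) * (b * (a ⋆ j) * b⁻¹))) =
      ((a ⋆ b)⁻¹ * (a * (i ⋆ (b * j)) * a⁻¹) * (a ⋆ b)) * (b * (a ⋆ j) * b⁻¹) := by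
    group
  rw [this]
  exact mul_mem (Subgroup.Normal.conj_mem' I.normal _ hu _) hv

/-- The quotient of a multiplicative Lie algebra by an ideal. -/
instance instQuotient (I : MLIdeal G) : MultLieAlgebra (G ⧸ I.toSubgroup) where
  lstar := Quotient.map₂ (· ⋆ ·) (by
    intro a a' ha b b' hb
    have ha' : a⁻¹ * a' ∈ I.toSubgroup := QuotientGroup.leftRel_apply.mp ha
    have hb' : b⁻¹ * b' ∈ I.toSubgroup := QuotientGroup.leftRel_apply.mp hb
    exact QuotientGroup.leftRel_apply.mpr (I.lstar_congr ha' hb'))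
  lstar_self x := Quotient.inductionOn x fun a => congrArg QuotientGroup.mk (lstar_self a)
  lstar_mul_right x y z := Quotient.inductionOn₃ x y z fun a b c =>
    congrArg QuotientGroup.mk (lstar_mul_right a b c)
  lstar_mul_left x y z := Quotient.inductionOn₃ x y z fun a b c =>
    congrArg QuotientGroup.mk (lstar_mul_left a b c)
  lstar_jacobi x y z := Quotient.inductionOn₃ x y z fun a b c =>
    congrArg QuotientGroup.mk (lstar_jacobi a b c)
  conj_lstar x y z := Quotient.inductionOn₃ x y z fun a b c =>
    congrArg QuotientGroup.mk (conj_lstar a b c)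

lemma quot_lstar (I : MLIdeal G) (a b : G) :
    (QuotientGroup.mk (a ⋆ b) : G ⧸ I.toSubgroup) = QuotientGroup.mk a ⋆ QuotientGroup.mk b :=
  rfl

/-- The ideal `I ∩ ᴹ[G,G]`. -/
def MLIdeal.infCommutator (I : MLIdeal G) : MLIdeal G where
  carrier := {x : G | x ∈ I.toSubgroup ∧ x ∈ mlCommutator G}
  one_mem' := ⟨one_mem _, one_mem _⟩
  mul_mem' := fun ha hb => ⟨mul_mem ha.1 hb.1, mul_mem ha.2 hb.2⟩
  inv_mem' := fun ha => ⟨inv_mem ha.1, inv_mem ha.2⟩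
  conj_mem' := fun n hn g =>
    ⟨I.conj_mem' n hn.1 g, Subgroup.Normal.conj_mem mlCommutator_normal n hn.2 g⟩
  lstar_mem_left' := by
    intro g i hi
    exact ⟨I.lstar_mem_left' g hi.1, lstar_mem_mlCommutator _ _⟩
  lstar_mem_right' := by
    intro g i hi
    exact ⟨I.lstar_mem_right' g hi.1, lstar_mem_mlCommutator _ _⟩

/-- A multiplicative Lie algebra isomorphism is a group isomorphism preserving `⋆`. -/
def IsMLAEquiv {G : Type u} {H : Type v} [MultLieAlgebra G] [MultLieAlgebra H]
    (e : G ≃* H) : Prop :=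
  ∀ a b : G, e (a ⋆ b) = e a ⋆ e b

/-- A witness that `G` and `H` arise as quotients of a common multiplicative Lie
algebra `K` by ideals `ZG`, `ZH`, with `G ∼ K ∼ H` (Theorem on common ancestors). -/
structure CommonQuotientWitness (G : Type u) (H : Type u)
    [MultLieAlgebra G] [MultLieAlgebra H] where
  K : Type u
  [instK : MultLieAlgebra K]
  ZG : MLIdeal K
  ZH : MLIdeal K
  isoG : G ≃* (K ⧸ ZH.toSubgroup)
  isoG_lstar : IsMLAEquiv isoG
  isoH : H ≃* (K ⧸ ZG.toSubgroup)
  isoH_lstar : IsMLAEquiv isoH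
  isoclinicGK : Isoclinic G K
  isoclinicKH : Isoclinic K H

/-- A witness that `G` and `H` embed as ideals of a common multiplicative Lie algebra
`K̃`, each isoclinic to `K̃` (common isoclinic descendant). -/
structure CommonIdealWitness (G : Type u) (H : Type u)
    [MultLieAlgebra G] [MultLieAlgebra H] where
  K : Type u
  [instK : MultLieAlgebra K]
  KG : MLIdeal K
  KH : MLIdeal K
  isoG : G ≃* KG.toMLSubalgebra.toSubgroup
  isoG_lstar : IsMLAEquiv isoG
  isoH : H ≃* KH.toMLSubalgebra.toSubgroup
  isoH_lstar : IsMLAEquiv isoH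
  isoclinicG : Isoclinic (KG.toMLSubalgebra.toSubgroup) K
  isoclinicH : Isoclinic (KH.toMLSubalgebra.toSubgroup) K

/-- A witness of a stem multiplicative Lie algebra isoclinic to `G`. -/
structure StemWitness (G : Type u) [MultLieAlgebra G] where
  H : Type u
  [instH : MultLieAlgebra H]
  stem : mlCenter H ≤ mlCommutator H
  isoclinic : Isoclinic G H

/-!
Hall's construction, carried over to multiplicative Lie algebras. A surjective homomorphism
`f : A → B` of multiplicative Lie algebras whose kernel meets `ᴹ[A,A]` trivially is an
isoclinism: its kernel is then automatically central, `f` maps `𝒵(A)` onto `𝒵(B)` and is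
injective on `ᴹ[A,A]`.

Embed `Z = 𝒵(G)` into a divisible abelian group `D` by `ι`. The map `Z → D / ι(Z ∩ ᴹ[G,G])` kills
`Z ∩ ᴹ[G,G]`, i.e. it is defined on `Z / (Z ∩ ᴹ[G,G]) ⊆ G / ᴹ[G,G]`, so by divisibility it extends
to `ψ : G → D / ι(Z ∩ ᴹ[G,G])` killing `ᴹ[G,G]`. The fibre product `H` of `ψ` and the projection
`D → D / ι(Z ∩ ᴹ[G,G])`, with `D` carrying the trivial `⋆`, maps onto `G`, and `ᴹ[H,H]` lies in
`G × 1`, so `H ∼ G`. The pairs `(z, ι z)` form a central subgroup `W` of `H` meeting `ᴹ[H,H]`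
trivially, so `H/W ∼ H`. An element of `H` that is central modulo `W` has the form `(z, ι z + ι b)`
with `z ∈ Z` and `b ∈ Z ∩ ᴹ[G,G]`, hence is `(z b, ι (z b)) · (b⁻¹, 1) ∈ W · ᴹ[H,H]`: this makes
`H/W` stem.
-/

instance mlCenter.instCommGroup : CommGroup (mlCenter G) where
  mul_comm a b := Subtype.ext (a.2.1 b)

instance : CommGroup (G ⧸ mlCommutator G) where
  mul_comm a b := by
    obtain ⟨x, rfl⟩ := QuotientGroup.mk_surjective a
    obtain ⟨y, rfl⟩ := QuotientGroup.mk_surjective b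
    rw [← QuotientGroup.mk_mul, ← QuotientGroup.mk_mul, QuotientGroup.eq]
    simpa [commutatorElement_def, mul_assoc] using commutator_mem_mlCommutator y⁻¹ x⁻¹

lemma commutatorElement_mul_mlCenter {z z' : G} (hz : z ∈ mlCenter G) (hz' : z' ∈ mlCenter G)
    (a b : G) : ⁅a * z, b * z'⁆ = ⁅a, b⁆ := by
  have hcomm {c y : G} (hc : c ∈ mlCenter G) : ⁅c, y⁆ = 1 ∧ ⁅y, c⁆ = 1 :=
    ⟨commutatorElement_eq_one_iff_mul_comm.mpr (hc.1 y),
      commutatorElement_eq_one_iff_mul_comm.mpr (hc.1 y).symm⟩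
  rw [commutatorElement_mul_left_eq_conj_mul, (hcomm hz).1, mul_one, mul_inv_cancel, one_mul,
    commutatorElement_mul_right_eq_mul_conj, (hcomm hz').2, mul_one, mul_inv_cancel_right]

lemma exists_mlCenter_of_mk_eq {a a' : G} (h : (a : G ⧸ mlCenter G) = a') :
    ∃ z ∈ mlCenter G, a' = a * z :=
  ⟨a⁻¹ * a', QuotientGroup.eq.mp h, (mul_inv_cancel_left a a').symm⟩

lemma commutatorElement_eq_of_mk_eq {a a' b b' : G} (ha : (a : G ⧸ mlCenter G) = a')
    (hb : (b : G ⧸ mlCenter G) = b') : ⁅a, b⁆ = ⁅a', b'⁆ := by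
  obtain ⟨z, hz, rfl⟩ := exists_mlCenter_of_mk_eq ha
  obtain ⟨z', hz', rfl⟩ := exists_mlCenter_of_mk_eq hb
  exact (commutatorElement_mul_mlCenter hz hz' a b).symm

lemma lstar_eq_of_mk_eq {a a' b b' : G} (ha : (a : G ⧸ mlCenter G) = a')
    (hb : (b : G ⧸ mlCenter G) = b') : a ⋆ b = a' ⋆ b' := by
  obtain ⟨z, hz, rfl⟩ := exists_mlCenter_of_mk_eq ha
  obtain ⟨z', hz', rfl⟩ := exists_mlCenter_of_mk_eq hb
  rw [mul_center_lstar hz, lstar_mul_center hz']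

section Isoclinic

variable {G₁ : Type u} {G₂ : Type v} {G₃ : Type*}
  [MultLieAlgebra G₁] [MultLieAlgebra G₂] [MultLieAlgebra G₃]

theorem Isoclinic.symm (h : Isoclinic G₁ G₂) : Isoclinic G₂ G₁ := by
  obtain ⟨e⟩ := h
  refine ⟨{ lam := e.lam.symm, mu := e.mu.symm, map_commutator := ?_, map_lstar := ?_ }⟩
  all_goals
    intro g g' h h' hg hg'
    replace hg := (e.lam.symm_apply_eq.mp hg).symm
    replace hg' := (e.lam.symm_apply_eq.mp hg').symm
  · have hmu : e.mu.symm ⟨⁅g, g'⁆, commutator_mem_mlCommutator g g'⟩ =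
        ⟨⁅h, h'⁆, commutator_mem_mlCommutator h h'⟩ :=
      e.mu.symm_apply_eq.mpr (Subtype.ext (e.map_commutator h h' g g' hg hg').symm)
    exact congrArg Subtype.val hmu
  · have hmu : e.mu.symm ⟨g ⋆ g', lstar_mem_mlCommutator g g'⟩ =
        ⟨h ⋆ h', lstar_mem_mlCommutator h h'⟩ :=
      e.mu.symm_apply_eq.mpr (Subtype.ext (e.map_lstar h h' g g' hg hg').symm)
    exact congrArg Subtype.val hmu

theorem Isoclinic.trans (h₁₂ : Isoclinic G₁ G₂) (h₂₃ : Isoclinic G₂ G₃) : Isoclinic G₁ G₃ := by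
  obtain ⟨e₁⟩ := h₁₂
  obtain ⟨e₂⟩ := h₂₃
  refine ⟨{
    lam := e₁.lam.trans e₂.lam
    mu := e₁.mu.trans e₂.mu
    map_commutator := ?_
    map_lstar := ?_ }⟩
  all_goals
    intro g g' k k' hg hg'
    obtain ⟨h, hh⟩ := QuotientGroup.mk_surjective (e₁.lam g)
    obtain ⟨h', hh'⟩ := QuotientGroup.mk_surjective (e₁.lam g')
    rw [MulEquiv.trans_apply, ← hh] at hg
    rw [MulEquiv.trans_apply, ← hh'] at hg'
    rw [MulEquiv.trans_apply]
  · have hmu : e₁.mu ⟨⁅g, g'⁆, _⟩ = ⟨⁅h, h'⁆, commutator_mem_mlCommutator h h'⟩ :=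
      Subtype.ext (e₁.map_commutator g g' h h' hh.symm hh'.symm)
    rw [hmu]
    exact e₂.map_commutator h h' k k' hg hg'
  · have hmu : e₁.mu ⟨g ⋆ g', _⟩ = ⟨h ⋆ h', lstar_mem_mlCommutator h h'⟩ :=
      Subtype.ext (e₁.map_lstar g g' h h' hh.symm hh'.symm)
    rw [hmu]
    exact e₂.map_lstar h h' k k' hg hg'

end Isoclinic

def IsMLHom {A : Type u} {B : Type v} [MultLieAlgebra A] [MultLieAlgebra B] (f : A →* B) :
    Prop :=
  ∀ a b : A, f (a ⋆ b) = f a ⋆ f b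

namespace IsMLHom

variable {A : Type u} {B : Type v} [MultLieAlgebra A] [MultLieAlgebra B] {f : A →* B}

lemma map_mlCommutator_le (hf : IsMLHom f) : (mlCommutator A).map f ≤ mlCommutator B := by
  rw [mlCommutator, MonoidHom.map_closure, Subgroup.closure_le]
  rintro _ ⟨x, ⟨a, b, rfl⟩ | ⟨a, b, rfl⟩, rfl⟩
  · rw [map_commutatorElement]
    exact commutator_mem_mlCommutator _ _
  · rw [hf]
    exact lstar_mem_mlCommutator _ _

lemma map_mlCommutator (hf : IsMLHom f) (hsurj : Function.Surjective f) :
    (mlCommutator A).map f = mlCommutator B := by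
  refine le_antisymm hf.map_mlCommutator_le ((Subgroup.closure_le _).mpr ?_)
  rintro _ (⟨a, b, rfl⟩ | ⟨a, b, rfl⟩) <;>
    obtain ⟨x, rfl⟩ := hsurj a <;> obtain ⟨y, rfl⟩ := hsurj b
  · exact ⟨⁅x, y⁆, commutator_mem_mlCommutator x y, map_commutatorElement f x y⟩
  · exact ⟨x ⋆ y, lstar_mem_mlCommutator x y, hf x y⟩

lemma map_mem_mlCenter (hf : IsMLHom f) (hsurj : Function.Surjective f) {a : A}
    (ha : a ∈ mlCenter A) : f a ∈ mlCenter B := by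
  refine ⟨fun y => ?_, fun y => ?_⟩ <;> obtain ⟨x, rfl⟩ := hsurj y
  · rw [← map_mul, ha.1 x, map_mul]
  · rw [← hf, ← hf, (ha.2 x).1, (ha.2 x).2, map_one]
    exact ⟨rfl, rfl⟩

lemma mem_mlCenter_of_map_mem (hf : IsMLHom f) (hker : Disjoint f.ker (mlCommutator A)) {a : A}
    (ha : f a ∈ mlCenter B) : a ∈ mlCenter A := by
  have eq_one {c : A} (hc : c ∈ mlCommutator A) (h1 : f c = 1) : c = 1 :=
    Subgroup.disjoint_def.mp hker h1 hc
  refine ⟨fun x => ?_, fun x => ⟨?_, ?_⟩⟩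
  · refine commutatorElement_eq_one_iff_mul_comm.mp (eq_one (commutator_mem_mlCommutator a x) ?_)
    rw [map_commutatorElement, commutatorElement_eq_one_iff_mul_comm]
    exact ha.1 (f x)
  · exact eq_one (lstar_mem_mlCommutator a x) ((hf a x).trans (ha.2 (f x)).1)
  · exact eq_one (lstar_mem_mlCommutator x a) ((hf x a).trans (ha.2 (f x)).2)

theorem isoclinic (hf : IsMLHom f) (hsurj : Function.Surjective f)
    (hker : Disjoint f.ker (mlCommutator A)) : Isoclinic A B := by
  let φ : A →* B ⧸ mlCenter B := (QuotientGroup.mk' (mlCenter B)).comp f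
  have hφ : φ.ker = mlCenter A := by
    refine le_antisymm (fun a ha => hf.mem_mlCenter_of_map_mem hker ?_)
      (fun a ha => (QuotientGroup.eq_one_iff _).mpr (hf.map_mem_mlCenter hsurj ha))
    exact (QuotientGroup.eq_one_iff _).mp ha
  have hμ : Function.Injective (f.subgroupMap (mlCommutator A)) := by
    rw [injective_iff_map_eq_one]
    intro c hc
    exact Subtype.ext (Subgroup.disjoint_def.mp hker (congrArg Subtype.val hc) c.2)
  refine ⟨{
    lam := (QuotientGroup.quotientMulEquivOfEq hφ.symm).trans
      (QuotientGroup.quotientKerEquivOfSurjective φ (QuotientGroup.mk_surjective.comp hsurj))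
    mu := (MulEquiv.ofBijective _ ⟨hμ, f.subgroupMap_surjective _⟩).trans
      (MulEquiv.subgroupCongr (hf.map_mlCommutator hsurj))
    map_commutator := fun g g' h h' hg hg' => ?_
    map_lstar := fun g g' h h' hg hg' => ?_ }⟩
  · exact (map_commutatorElement f g g').trans (commutatorElement_eq_of_mk_eq hg hg')
  · exact (hf g g').trans (lstar_eq_of_mk_eq hg hg')

end IsMLHom

instance instMultiplicative (A : Type*) [AddCommGroup A] : MultLieAlgebra (Multiplicative A) where
  lstar _ _ := 1
  lstar_self _ := rfl
  lstar_mul_right _ _ _ := by group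
  lstar_mul_left _ _ _ := by group
  lstar_jacobi _ _ _ := by group
  conj_lstar _ _ _ := by group

lemma mlCommutator_multiplicative_eq_bot (A : Type*) [AddCommGroup A] :
    mlCommutator (Multiplicative A) = ⊥ := by
  rw [eq_bot_iff, mlCommutator, Subgroup.closure_le]
  rintro _ (⟨a, b, rfl⟩ | ⟨a, b, rfl⟩)
  · exact commutatorElement_eq_one_iff_mul_comm.mpr (mul_comm a b)
  · rfl

def MLIdeal.ofLeMlCenter (N : Subgroup G) (hN : N ≤ mlCenter G) : MLIdeal G where
  toSubgroup := N
  conj_mem' n hn g := by rwa [← (hN hn).1 g, mul_inv_cancel_right]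
  lstar_mem_left' g i hi := by rw [((hN hi).2 g).2]; exact N.one_mem
  lstar_mem_right' g i hi := by rw [((hN hi).2 g).1]; exact N.one_mem

lemma MLIdeal.isMLHom_mk' (I : MLIdeal G) : IsMLHom (QuotientGroup.mk' I.toSubgroup) :=
  fun _ _ => rfl

theorem isoclinic_quotient_of_le_mlCenter (N : Subgroup G) (hN : N ≤ mlCenter G)
    (hNM : Disjoint N (mlCommutator G)) :
    Isoclinic G (G ⧸ (MLIdeal.ofLeMlCenter N hN).toSubgroup) := by
  refine (MLIdeal.ofLeMlCenter N hN).isMLHom_mk'.isoclinic (QuotientGroup.mk'_surjective _) ?_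
  rwa [QuotientGroup.ker_mk']

namespace MLSubalgebra

lemma isMLHom_fst {K : Type*} [MultLieAlgebra K] (H : MLSubalgebra (G × K)) :
    IsMLHom ((MonoidHom.fst G K).comp H.toSubgroup.subtype) :=
  fun _ _ => rfl

variable {A : Type*} [AddCommGroup A] (H : MLSubalgebra (G × Multiplicative A))

lemma snd_eq_one_of_mem_mlCommutator {h : H.toSubgroup}
    (hh : h ∈ mlCommutator H.toSubgroup) : (h : G × Multiplicative A).2 = 1 := by
  have hf : IsMLHom ((MonoidHom.snd G (Multiplicative A)).comp H.toSubgroup.subtype) :=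
    fun _ _ => rfl
  have := hf.map_mlCommutator_le ⟨h, hh, rfl⟩
  rwa [mlCommutator_multiplicative_eq_bot, Subgroup.mem_bot] at this

lemma mem_mlCenter_of_fst_mem {h : H.toSubgroup}
    (hh : (h : G × Multiplicative A).1 ∈ mlCenter G) : h ∈ mlCenter H.toSubgroup := by
  refine ⟨fun x => Subtype.ext (Prod.ext (hh.1 _) (mul_comm _ _)),
    fun x => ⟨Subtype.ext (Prod.ext (hh.2 _).1 rfl), Subtype.ext (Prod.ext (hh.2 _).2 rfl)⟩⟩

theorem isoclinic_of_fst_surjective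
    (hsurj : ∀ g : G, ∃ h : H.toSubgroup, (h : G × Multiplicative A).1 = g) :
    Isoclinic H.toSubgroup G := by
  refine H.isMLHom_fst.isoclinic hsurj
    (Subgroup.disjoint_def.mpr fun {h} hker hM => Subtype.ext (Prod.ext hker ?_))
  exact H.snd_eq_one_of_mem_mlCommutator hM

end MLSubalgebra

noncomputable instance {D : Type*} [AddCommGroup D] [DivisibleBy D ℤ] (X : AddSubgroup D) :
    DivisibleBy (D ⧸ X) ℤ :=
  QuotientAddGroup.mk_surjective.divisibleBy _ fun _ _ => rfl

theorem exists_injective_into_divisible (A : Type u) [AddCommGroup A] :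
    ∃ (D : Type u) (_ : AddCommGroup D) (_ : DivisibleBy D ℤ) (ι : A →+ D),
      Function.Injective ι :=
  ⟨CharacterModule A → AddCircle (1 : ℚ), inferInstance, inferInstance,
    AddMonoidHom.pi fun c => (c : A →+ AddCircle (1 : ℚ)),
    (injective_iff_map_eq_zero _).mpr fun _ ha =>
      CharacterModule.eq_zero_of_character_apply (congrFun ha)⟩

theorem exists_extension_of_mlCenter {Q : Type*} [AddCommGroup Q] [DivisibleBy Q ℤ]
    (φ : mlCenter G →* Multiplicative Q)
    (hφ : (mlCommutator G).subgroupOf (mlCenter G) ≤ φ.ker) :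
    ∃ ψ : G →* Multiplicative Q, mlCommutator G ≤ ψ.ker ∧ ∀ z : mlCenter G, ψ z = φ z := by
  let s : mlCenter G →* G ⧸ mlCommutator G :=
    (QuotientGroup.mk' (mlCommutator G)).comp (mlCenter G).subtype
  have hs : s.ker = (mlCommutator G).subgroupOf (mlCenter G) := by
    ext z
    simp [s, Subgroup.mem_subgroupOf, QuotientGroup.eq_one_iff]
  obtain ⟨e, he⟩ := (Module.Baer.of_divisible Q).extension_property_addMonoidHom
    (MonoidHom.toAdditive (QuotientGroup.kerLift s)) (QuotientGroup.kerLift_injective s)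
    (MonoidHom.toAdditiveLeft (QuotientGroup.lift s.ker φ (hs ▸ hφ)))
  refine ⟨(MonoidHom.toAdditiveLeft.symm e).comp (QuotientGroup.mk' _), fun c hc => ?_,
    fun z => ?_⟩
  · simp [MonoidHom.mem_ker, (QuotientGroup.eq_one_iff c).mpr hc]
  · have := DFunLike.congr_fun he (Additive.ofMul (z : mlCenter G ⧸ s.ker))
    simpa [s] using congrArg Multiplicative.ofAdd this

section StemConstruction

variable {D : Type*} [AddCommGroup D] (ι : Additive (mlCenter G) →+ D)

def centerCommutatorImage : AddSubgroup D :=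
  (Subgroup.toAddSubgroup ((mlCommutator G).subgroupOf (mlCenter G))).map ι

variable {ι} (ψ : G →* Multiplicative (D ⧸ centerCommutatorImage ι))
  (hψM : mlCommutator G ≤ ψ.ker) (hψZ : ∀ z : mlCenter G, ψ z = .ofAdd (ι (.ofMul z)))

def fiberProduct : MLSubalgebra (G × Multiplicative D) where
  toSubgroup := (ψ.comp (MonoidHom.fst _ _)).eqLocus
    ((AddMonoidHom.toMultiplicative (QuotientAddGroup.mk' _)).comp (MonoidHom.snd _ _))
  lstar_mem' {a b} _ _ := (hψM (lstar_mem_mlCommutator a.1 b.1)).trans rfl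

lemma mem_fiberProduct {p : G × Multiplicative D} :
    p ∈ (fiberProduct ψ hψM).toSubgroup ↔ ψ p.1 = .ofAdd (p.2.toAdd : D ⧸ _) :=
  Iff.rfl

lemma fiberProduct_fst_surjective (g : G) :
    ∃ h : (fiberProduct ψ hψM).toSubgroup, (h : G × Multiplicative D).1 = g := by
  obtain ⟨d, hd⟩ := QuotientAddGroup.mk_surjective (ψ g).toAdd
  exact ⟨⟨(g, .ofAdd d), (mem_fiberProduct ψ hψM).mpr (by simp [hd])⟩, rfl⟩

def centerToFiberProduct : mlCenter G →* (fiberProduct ψ hψM).toSubgroup :=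
  ((mlCenter G).subtype.prod (AddMonoidHom.toMultiplicativeRight ι)).codRestrict _
    fun z => (mem_fiberProduct ψ hψM).mpr (hψZ z)

lemma range_centerToFiberProduct_le_mlCenter :
    (centerToFiberProduct ψ hψM hψZ).range ≤ mlCenter (fiberProduct ψ hψM).toSubgroup := by
  rintro _ ⟨z, rfl⟩
  exact MLSubalgebra.mem_mlCenter_of_fst_mem _ z.2

lemma disjoint_range_centerToFiberProduct (hι : Function.Injective ι) :
    Disjoint (centerToFiberProduct ψ hψM hψZ).range
      (mlCommutator (fiberProduct ψ hψM).toSubgroup) := by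
  rw [Subgroup.disjoint_def]
  rintro _ ⟨z, rfl⟩ hM
  have hz : ι (.ofMul z) = 0 := congrArg Multiplicative.toAdd
    ((fiberProduct ψ hψM).snd_eq_one_of_mem_mlCommutator hM)
  rw [show z = 1 from (injective_iff_map_eq_zero ι).mp hι _ hz, map_one]

abbrev stemQuotient :=
  (fiberProduct ψ hψM).toSubgroup ⧸
    (MLIdeal.ofLeMlCenter _ (range_centerToFiberProduct_le_mlCenter ψ hψM hψZ)).toSubgroup

theorem isoclinic_stemQuotient (hι : Function.Injective ι) :
    Isoclinic G (stemQuotient ψ hψM hψZ) :=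
  ((fiberProduct ψ hψM).isoclinic_of_fst_surjective
    (fiberProduct_fst_surjective ψ hψM)).symm.trans
    (isoclinic_quotient_of_le_mlCenter _ _ (disjoint_range_centerToFiberProduct ψ hψM hψZ hι))

lemma exists_eq_centerToFiberProduct_mul {h : (fiberProduct ψ hψM).toSubgroup}
    (hh : (h : G × Multiplicative D).1 ∈ mlCenter G) :
    ∃ z : mlCenter G, ∃ c ∈ mlCommutator (fiberProduct ψ hψM).toSubgroup,
      h = centerToFiberProduct ψ hψM hψZ z * c := by
  set z : mlCenter G := ⟨_, hh⟩
  have hmk : (QuotientAddGroup.mk (ι (.ofMul z)) : D ⧸ centerCommutatorImage ι) =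
      QuotientAddGroup.mk (h : G × Multiplicative D).2.toAdd :=
    congrArg Multiplicative.toAdd ((hψZ z).symm.trans h.2)
  obtain ⟨b, hbB, hb⟩ := QuotientAddGroup.eq.mp hmk
  obtain ⟨c, hcM, hc⟩ : ((b.toMul⁻¹ : mlCenter G) : G) ∈
      (mlCommutator (fiberProduct ψ hψM).toSubgroup).map
        ((MonoidHom.fst _ _).comp (fiberProduct ψ hψM).toSubgroup.subtype) := by
    rw [(fiberProduct ψ hψM).isMLHom_fst.map_mlCommutator (fiberProduct_fst_surjective ψ hψM)]
    exact inv_mem (Subgroup.mem_subgroupOf.mp hbB)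
  have hc1 : (c : G × Multiplicative D).1 = ((b.toMul⁻¹ : mlCenter G) : G) := hc
  have hc2 := (fiberProduct ψ hψM).snd_eq_one_of_mem_mlCommutator hcM
  refine ⟨z * b.toMul, c, hcM, Subtype.ext (Prod.ext ?_ ?_)⟩
  · simp [centerToFiberProduct, hc1, z]
  · simp [centerToFiberProduct, hb, hc2]

theorem mlCenter_stemQuotient_le (hι : Function.Injective ι) :
    mlCenter (stemQuotient ψ hψM hψZ) ≤ mlCommutator (stemQuotient ψ hψM hψZ) := by
  set H := (fiberProduct ψ hψM).toSubgroup
  set W := MLIdeal.ofLeMlCenter _ (range_centerToFiberProduct_le_mlCenter ψ hψM hψZ)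
  intro x hx
  obtain ⟨h, rfl⟩ := QuotientGroup.mk_surjective x
  have hhZ : h ∈ mlCenter H := W.isMLHom_mk'.mem_mlCenter_of_map_mem
    (by rw [QuotientGroup.ker_mk']; exact disjoint_range_centerToFiberProduct ψ hψM hψZ hι) hx
  obtain ⟨z, c, hcM, rfl⟩ := exists_eq_centerToFiberProduct_mul ψ hψM hψZ
    ((fiberProduct ψ hψM).isMLHom_fst.map_mem_mlCenter (fiberProduct_fst_surjective ψ hψM) hhZ)
  have hz : (centerToFiberProduct ψ hψM hψZ z : H ⧸ W.toSubgroup) = 1 :=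
    (QuotientGroup.eq_one_iff _).mpr ⟨z, rfl⟩
  rw [QuotientGroup.mk_mul, hz, one_mul]
  exact W.isMLHom_mk'.map_mlCommutator_le ⟨c, hcM, rfl⟩

end StemConstruction

/-- Every multiplicative Lie algebra is isoclinic to a stem
multiplicative Lie algebra. -/
theorem exists_stem_isoclinic (G : Type u) [MultLieAlgebra G] :
    Nonempty (StemWitness G) := by
  obtain ⟨D, _, _, ι, hι⟩ := exists_injective_into_divisible (Additive (mlCenter G))
  obtain ⟨ψ, hψM, hψZ⟩ := exists_extension_of_mlCenter
    (AddMonoidHom.toMultiplicativeRight ((QuotientAddGroup.mk' (centerCommutatorImage ι)).comp ι))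
    fun z hz => (QuotientAddGroup.eq_zero_iff _).mpr ⟨.ofMul z, hz, rfl⟩
  exact ⟨{
    H := stemQuotient ψ hψM hψZ
    stem := mlCenter_stemQuotient_le ψ hψM hψZ hι
    isoclinic := isoclinic_stemQuotient ψ hψM hψZ hι }⟩

end MultLieAlgebra
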